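/- Let ψ(m) denote the minimum of |F_Δ| over all surjective colourings Δ : ℕ^(2) → [m]. Then ψ(binom(n,2)+1) = n for every n ≥ 2, and ψ(binom(n,2)+2) = n+1 for every n ≥ 2. -/

import Mathlib

/-- The set of colours appearing on edges inside `X` under the edge-colouring `Δ`
of the complete graph on `ℕ`. -/
def colorsOn {C : Type*} (Δ : ℕ → ℕ → C) (X : Set ℕ) : Set C :=
  {c | ∃ x ∈ X, ∃ y ∈ X, x ≠ y ∧ Δ x y = c}

/-- `F_Δ`: the set of values `γ(X)` (number of colours inside `X`)
over infinite `X ⊆ ℕ`. -/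
def FDelta {C : Type*} (Δ : ℕ → ℕ → C) : Set ℕ :=
  {k | ∃ X : Set ℕ, X.Infinite ∧ (colorsOn Δ X).ncard = k}

/-- `ψ(m)`: the minimum of `|F_Δ|` over all surjective symmetric colourings
`Δ : ℕ^(2) → [m]`. -/
noncomputable def psi (m : ℕ) : ℕ :=
  sInf {k | ∃ Δ : ℕ → ℕ → Fin m,
    (∀ x y, Δ x y = Δ y x) ∧
    (∀ c : Fin m, ∃ x y : ℕ, x ≠ y ∧ Δ x y = c) ∧
    (FDelta Δ).ncard = k}

/-!
Lower bound `m ≤ binom(|F_Δ|, 2) + 1`. By Ramsey's theorem there is an infinite monochromatic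
set `B`, which we may shrink so that each vertex of a finite set `S` spanning an edge of every
colour sends a single colour into `B`. Add the vertices of `S` to `B` one at a time, each time
one that creates the most new colours. A vertex creates at most one new colour at the start, and
each step raises that number by at most one (the only new edge is the one to the added
vertex); a step creating `i > 0` new colours also produces a new value of `γ`. So if `γ` takes
`v` values on the sets `T ∪ B`, at most `1 + 2 + ⋯ + (v - 1) = binom(v, 2)` colours are added
to the single colour of `B`.

Upper bound: collapse all vertices `≥ N` to `N` and colour `{a, b}` by `s(a, b)`. Then `γ(X)`
depends only on `k = |X ∩ [0, N)|`: it is `binom(k, 2) + k + 1`. Giving all edges between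
`[0, N)` and the collapsed tail one common colour instead yields `binom(k, 2) + min(k, 1) + 1`.
As `k ≤ N`, these colourings have at most `N + 1` values of `γ`, and the lower bound shows that
they cannot have fewer.
-/

theorem Set.Infinite.exists_infinite_fiber {α β : Type*} [Finite β] {s : Set α}
    (hs : s.Infinite) (f : α → β) : ∃ b, {x ∈ s | f x = b}.Infinite := by
  by_contra! h
  exact hs <| (Set.finite_iUnion h).subset fun x hx => Set.mem_iUnion.2 ⟨f x, hx, rfl⟩

theorem exists_infinite_subset_forall_eq {ι α C : Type*} [Finite C] (f : ι → α → C)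
    (S : Finset ι) {B : Set α} (hB : B.Infinite) :
    ∃ A ⊆ B, A.Infinite ∧ ∀ v ∈ S, ∃ c, ∀ y ∈ A, f v y = c := by
  classical
  induction S using Finset.induction_on with
  | empty => exact ⟨B, subset_rfl, hB, by simp⟩
  | insert v S _ ih =>
    obtain ⟨A, hAB, hA, hconst⟩ := ih
    obtain ⟨c, hc⟩ := hA.exists_infinite_fiber (f v)
    refine ⟨_, fun y hy => hAB hy.1, hc, (Finset.forall_mem_insert _ _ _).2
      ⟨⟨c, fun y hy => hy.2⟩, fun w hw => ?_⟩⟩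
    obtain ⟨cw, hcw⟩ := hconst w hw
    exact ⟨cw, fun y hy => hcw y hy.1⟩

theorem exists_infinite_monochromatic {C : Type*} [Finite C] (Δ : ℕ → ℕ → C)
    (hsym : ∀ x y, Δ x y = Δ y x) :
    ∃ A : Set ℕ, A.Infinite ∧ ∃ a, ∀ x ∈ A, ∀ y ∈ A, x ≠ y → Δ x y = a := by
  have step : ∀ S : {S : Set ℕ // S.Infinite}, ∃ T : {T : Set ℕ // T.Infinite}, ∃ c,
      T.1 ⊆ S.1 ∧ ∀ y ∈ T.1, sInf S.1 < y ∧ Δ (sInf S.1) y = c := by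
    rintro ⟨S, hS⟩
    obtain ⟨c, hc⟩ := (hS.sdiff (Set.finite_Iic (sInf S))).exists_infinite_fiber (Δ (sInf S))
    exact ⟨⟨_, hc⟩, c, fun y hy => hy.1.1, fun y hy => ⟨not_le.1 hy.1.2, hy.2⟩⟩
  choose next col hnext using step
  let S : ℕ → {S : Set ℕ // S.Infinite} := fun k => next^[k] ⟨Set.univ, Set.infinite_univ⟩
  have hS_succ : ∀ k, S (k + 1) = next (S k) := fun k => Function.iterate_succ_apply' ..
  have hS_anti : Antitone fun k => (S k).1 :=
    antitone_nat_of_succ_le fun k => hS_succ k ▸ (hnext (S k)).1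
  let x : ℕ → ℕ := fun k => sInf (S k).1
  have hx : ∀ {j k}, j < k → x j < x k ∧ Δ (x j) (x k) = col (S j) := fun {j k} hjk =>
    (hnext (S j)).2 _ (hS_succ j ▸ hS_anti hjk (Nat.sInf_mem (S k).2.nonempty))
  have hx_mono : StrictMono x := strictMono_nat_of_lt_succ fun k => (hx k.lt_succ_self).1
  obtain ⟨a, ha⟩ := Set.infinite_univ.exists_infinite_fiber fun k => col (S k)
  refine ⟨x '' {k | col (S k) = a}, (by simpa using ha : Set.Infinite _).image
    hx_mono.injective.injOn, a, ?_⟩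
  rintro _ ⟨j, hj, rfl⟩ _ ⟨k, hk, rfl⟩ hne
  rcases lt_or_gt_of_ne (ne_of_apply_ne x hne) with h | h
  · exact (hx h).2.trans hj
  · exact (hsym _ _).trans ((hx h).2.trans hk)

section ncardValues

variable {ι α : Type*} (G : Finset ι → Set α)

noncomputable def ncardValues (T : Finset ι) : ℕ := (T.powerset.image fun R => (G R).ncard).card

variable {G}

theorem ncardValues_mono {T T' : Finset ι} (h : T ⊆ T') : ncardValues G T ≤ ncardValues G T' :=
  Finset.card_le_card (Finset.image_subset_image (Finset.powerset_mono.2 h))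

theorem one_le_ncardValues (T : Finset ι) : 1 ≤ ncardValues G T :=
  Finset.card_pos.2 ⟨_, Finset.mem_image_of_mem _ (Finset.empty_mem_powerset T)⟩

theorem ncardValues_empty : ncardValues G ∅ = 1 := by
  simp [ncardValues]

theorem ncardValues_lt [Finite α] (hG : Monotone G) {T T' : Finset ι} (h : T ⊆ T')
    (hlt : (G T).ncard < (G T').ncard) : ncardValues G T < ncardValues G T' := by
  refine Finset.card_lt_card <| (Finset.ssubset_iff_of_subset
    (Finset.image_subset_image (Finset.powerset_mono.2 h))).2
    ⟨_, Finset.mem_image_of_mem _ (Finset.mem_powerset_self T'), ?_⟩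
  simp only [Finset.mem_image, Finset.mem_powerset, not_exists, not_and]
  intro R hR hRT'
  have := Set.ncard_le_ncard (hG hR)
  omega

theorem choose_two_add_le {i v v' : ℕ} (hi : i ≤ v) (hv : v ≤ v') (hlt : 0 < i → v < v') :
    v.choose 2 + i ≤ v'.choose 2 := by
  rcases Nat.eq_zero_or_pos i with rfl | hi0
  · exact Nat.choose_le_choose 2 hv
  · calc v.choose 2 + i ≤ (v + 1).choose 2 := by
          rw [Nat.choose_succ_succ' v 1, Nat.choose_one_right, add_comm]; gcongr
      _ ≤ v'.choose 2 := Nat.choose_le_choose 2 (hlt hi0)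

variable [DecidableEq ι] [Finite α]

theorem ncard_le_of_forall_ncard_sdiff_le (hG : Monotone G)
    (hstep : ∀ T u w, (G (insert u (insert w T)) \ G (insert w T)).ncard ≤
      (G (insert u T) \ G T).ncard + 1) {S : Finset ι} :
    ∀ T ⊆ S, (∀ w ∈ S \ T, (G (insert w T) \ G T).ncard ≤ ncardValues G T) →
      (G T).ncard ≤ (G ∅).ncard + (ncardValues G T).choose 2 →
      (G S).ncard ≤ (G ∅).ncard + (ncardValues G S).choose 2 := by
  intro T hTS hinc hT
  induction hd : (S \ T).card generalizing T with
  | zero =>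
    rw [Finset.card_eq_zero, Finset.sdiff_eq_empty_iff_subset] at hd
    rwa [hTS.antisymm hd] at hT
  | succ d ih =>
    obtain ⟨w, hw, hmax⟩ := Finset.exists_max_image (S \ T)
      (fun w => (G (insert w T) \ G T).ncard) (Finset.card_pos.1 (by omega))
    obtain ⟨hwS, hwT⟩ := Finset.mem_sdiff.1 hw
    set i := (G (insert w T) \ G T).ncard
    have hcard : (G (insert w T)).ncard = (G T).ncard + i := by
      rw [← Set.ncard_sdiff_add_ncard_of_subset (hG (Finset.subset_insert w T)), add_comm]
    have hv := ncardValues_mono (G := G) (Finset.subset_insert w T)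
    have hlt : 0 < i → ncardValues G T < ncardValues G (insert w T) := fun hi =>
      ncardValues_lt hG (Finset.subset_insert w T) (by omega)
    have hi : i + 1 ≤ ncardValues G (insert w T) := by
      rcases Nat.eq_zero_or_pos i with h0 | hpos
      · exact h0 ▸ one_le_ncardValues _
      · exact (Nat.add_le_add_right (hinc w hw) 1).trans (hlt hpos)
    refine ih (insert w T) (Finset.insert_subset hwS hTS) (fun u hu => ?_) ?_ ?_
    · rw [Finset.sdiff_insert] at hu
      have := hstep T u w
      have := hmax u (Finset.mem_of_mem_erase hu)
      omega
    · rw [hcard]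
      have := choose_two_add_le (hinc w hw) hv hlt
      omega
    · rw [Finset.sdiff_insert, Finset.card_erase_of_mem hw]
      omega

theorem ncard_le_add_choose_ncardValues (hG : Monotone G)
    (hstep : ∀ T u w, (G (insert u (insert w T)) \ G (insert w T)).ncard ≤
      (G (insert u T) \ G T).ncard + 1) (S : Finset ι)
    (hstart : ∀ v ∈ S, (G {v} \ G ∅).ncard ≤ 1) :
    (G S).ncard ≤ (G ∅).ncard + (ncardValues G S).choose 2 :=
  ncard_le_of_forall_ncard_sdiff_le hG hstep ∅ (Finset.empty_subset S)
    (by simpa [ncardValues_empty] using hstart) (by simp [ncardValues_empty])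

end ncardValues

section colorsOn

variable {C : Type*} (Δ : ℕ → ℕ → C)

theorem colorsOn_mono : Monotone (colorsOn Δ) := by
  rintro X Y h _ ⟨x, hx, y, hy, hxy, rfl⟩
  exact ⟨x, h hx, y, h hy, hxy, rfl⟩

theorem colorsOn_comp {β : Type*} (f : C → β) (X : Set ℕ) :
    colorsOn (fun x y => f (Δ x y)) X = f '' colorsOn Δ X := by
  ext
  simp only [colorsOn, Set.mem_ofPred_eq, Set.mem_image]
  constructor
  · rintro ⟨x, hx, y, hy, hxy, rfl⟩
    exact ⟨_, ⟨x, hx, y, hy, hxy, rfl⟩, rfl⟩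
  · rintro ⟨_, ⟨x, hx, y, hy, hxy, rfl⟩, rfl⟩
    exact ⟨x, hx, y, hy, hxy, rfl⟩

theorem colorsOn_congr {Δ' : ℕ → ℕ → C} {X : Set ℕ}
    (h : ∀ x ∈ X, ∀ y ∈ X, Δ x y = Δ' x y) : colorsOn Δ X = colorsOn Δ' X := by
  ext
  constructor <;> rintro ⟨x, hx, y, hy, hxy, rfl⟩
  exacts [⟨x, hx, y, hy, hxy, (h x hx y hy).symm⟩, ⟨x, hx, y, hy, hxy, h x hx y hy⟩]

variable {Δ}

theorem colorsOn_insert (hsym : ∀ x y, Δ x y = Δ y x) (v : ℕ) (X : Set ℕ) :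
    colorsOn Δ (insert v X) = colorsOn Δ X ∪ Δ v '' (X \ {v}) := by
  ext
  constructor
  · rintro ⟨x, rfl | hx, y, rfl | hy, hxy, rfl⟩
    · exact absurd rfl hxy
    · exact Or.inr ⟨y, ⟨hy, hxy.symm⟩, rfl⟩
    · exact Or.inr ⟨x, ⟨hx, hxy⟩, hsym _ _⟩
    · exact Or.inl ⟨x, hx, y, hy, hxy, rfl⟩
  · rintro (hc | ⟨y, ⟨hy, hyv⟩, rfl⟩)
    · exact colorsOn_mono Δ (Set.subset_insert v X) hc
    · exact ⟨v, Set.mem_insert v X, y, Set.mem_insert_of_mem v hy, Ne.symm hyv, rfl⟩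

theorem colorsOn_insert_sdiff_subset (hsym : ∀ x y, Δ x y = Δ y x) (v : ℕ) (X : Set ℕ) :
    colorsOn Δ (insert v X) \ colorsOn Δ X ⊆ Δ v '' (X \ {v}) := by
  rw [colorsOn_insert hsym, Set.union_sdiff_left]
  exact Set.sdiff_subset

theorem colorsOn_insert_insert_sdiff_subset (hsym : ∀ x y, Δ x y = Δ y x) (u w : ℕ)
    (X : Set ℕ) : colorsOn Δ (insert u (insert w X)) \ colorsOn Δ (insert w X) ⊆
      insert (Δ u w) (colorsOn Δ (insert u X) \ colorsOn Δ X) := by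
  rw [colorsOn_insert hsym u (insert w X), colorsOn_insert hsym u X]
  rintro _ ⟨hc | ⟨y, ⟨rfl | hy, hyu⟩, rfl⟩, hc'⟩
  · exact absurd hc hc'
  · exact Or.inl rfl
  · exact Or.inr ⟨Or.inr ⟨y, ⟨hy, hyu⟩, rfl⟩,
      fun h => hc' (colorsOn_mono Δ (Set.subset_insert w X) h)⟩

variable [Finite C]

theorem ncard_colorsOn_insert_sdiff_le_one (hsym : ∀ x y, Δ x y = Δ y x) {v : ℕ} {X : Set ℕ}
    {c : C} (hc : ∀ y ∈ X, Δ v y = c) :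
    (colorsOn Δ (insert v X) \ colorsOn Δ X).ncard ≤ 1 := by
  refine (Set.ncard_le_ncard ((colorsOn_insert_sdiff_subset hsym v X).trans ?_)).trans
    (Set.ncard_singleton c).le
  rintro _ ⟨y, hy, rfl⟩
  exact hc y hy.1

theorem ncard_colorsOn_insert_insert_sdiff_le (hsym : ∀ x y, Δ x y = Δ y x) (u w : ℕ)
    (X : Set ℕ) : (colorsOn Δ (insert u (insert w X)) \ colorsOn Δ (insert w X)).ncard ≤
      (colorsOn Δ (insert u X) \ colorsOn Δ X).ncard + 1 :=
  (Set.ncard_le_ncard (colorsOn_insert_insert_sdiff_subset hsym u w X)).trans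
    (Set.ncard_insert_le _ _)

end colorsOn

theorem FDelta_finite {C : Type*} [Finite C] (Δ : ℕ → ℕ → C) : (FDelta Δ).Finite :=
  (Set.finite_Iic (Nat.card C)).subset <| by
    rintro _ ⟨X, -, rfl⟩
    exact Set.ncard_le_card _

theorem card_le_choose_ncard_FDelta_add_one {C : Type*} [Finite C] (Δ : ℕ → ℕ → C)
    (hsym : ∀ x y, Δ x y = Δ y x) (hsurj : ∀ c, ∃ x y, x ≠ y ∧ Δ x y = c) :
    Nat.card C ≤ (FDelta Δ).ncard.choose 2 + 1 := by
  have := Fintype.ofFinite C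
  obtain ⟨A, hA, a, ha⟩ := exists_infinite_monochromatic Δ hsym
  choose p q hpq hpqc using hsurj
  let S : Finset ℕ := Finset.univ.image p ∪ Finset.univ.image q
  obtain ⟨B, hBA, hB, hconst⟩ := exists_infinite_subset_forall_eq Δ S hA
  let G : Finset ℕ → Set C := fun T => colorsOn Δ (↑T ∪ B)
  have hG : Monotone G := fun T T' h =>
    colorsOn_mono Δ (Set.union_subset_union_left _ (Finset.coe_subset.2 h))
  have hstep : ∀ T u w, (G (insert u (insert w T)) \ G (insert w T)).ncard ≤
      (G (insert u T) \ G T).ncard + 1 := fun T u w => by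
    simpa only [G, Finset.coe_insert, Set.insert_union] using
      ncard_colorsOn_insert_insert_sdiff_le hsym u w (↑T ∪ B)
  have hstart : ∀ v ∈ S, (G {v} \ G ∅).ncard ≤ 1 := fun v hv => by
    obtain ⟨c, hc⟩ := hconst v hv
    simpa only [G, Finset.coe_singleton, Finset.coe_empty, Set.singleton_union,
      Set.empty_union] using ncard_colorsOn_insert_sdiff_le_one hsym hc
  have hGS : G S = Set.univ := Set.eq_univ_of_forall fun c =>
    ⟨p c, Or.inl (by simp [S]), q c, Or.inl (by simp [S]), hpq c, hpqc c⟩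
  have hG0 : (G ∅).ncard ≤ 1 := by
    refine (Set.ncard_le_ncard (t := {a}) ?_).trans (Set.ncard_singleton a).le
    rintro _ ⟨x, hx, y, hy, hxy, rfl⟩
    simp only [Finset.coe_empty, Set.empty_union] at hx hy
    exact ha x (hBA hx) y (hBA hy) hxy
  have hvalues : ncardValues G S ≤ (FDelta Δ).ncard := by
    rw [ncardValues, ← Set.ncard_coe_finset]
    refine Set.ncard_le_ncard ?_ (FDelta_finite Δ)
    intro k hk
    obtain ⟨R, -, rfl⟩ := Finset.mem_image.1 hk
    exact ⟨_, hB.mono Set.subset_union_right, rfl⟩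
  calc Nat.card C = (G S).ncard := by rw [hGS, Set.ncard_univ]
    _ ≤ (G ∅).ncard + (ncardValues G S).choose 2 :=
      ncard_le_add_choose_ncardValues hG hstep S hstart
    _ ≤ 1 + (FDelta Δ).ncard.choose 2 := add_le_add hG0 (Nat.choose_le_choose 2 hvalues)
    _ = (FDelta Δ).ncard.choose 2 + 1 := add_comm _ _

theorem FDelta_comp_of_injOn {C β : Type*} (Δ : ℕ → ℕ → C) {f : C → β}
    (hf : Set.InjOn f (colorsOn Δ Set.univ)) : FDelta (fun x y => f (Δ x y)) = FDelta Δ := by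
  ext k
  simp only [FDelta, colorsOn_comp,
    (hf.mono (colorsOn_mono Δ (Set.subset_univ _))).ncard_image]

theorem exists_fin_recoloring {β : Type*} (Δ : ℕ → ℕ → β) (hsym : ∀ x y, Δ x y = Δ y x)
    (hfin : (colorsOn Δ Set.univ).Finite) :
    ∃ Δ' : ℕ → ℕ → Fin (colorsOn Δ Set.univ).ncard, (∀ x y, Δ' x y = Δ' y x) ∧
      (∀ c, ∃ x y, x ≠ y ∧ Δ' x y = c) ∧ FDelta Δ' = FDelta Δ := by
  classical
  set R := colorsOn Δ Set.univ
  have : Finite R := hfin.to_subtype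
  let e : R ≃ Fin R.ncard := (Finite.equivFin R).trans (finCongr (Nat.card_coe_set_eq R))
  have hR : ∀ x y, x ≠ y → Δ x y ∈ R := fun x y h => ⟨x, trivial, y, trivial, h, rfl⟩
  let f : β → Fin R.ncard := fun b =>
    if h : b ∈ R then e ⟨b, h⟩ else e ⟨_, hR 0 1 zero_ne_one⟩
  have hf : ∀ b (h : b ∈ R), f b = e ⟨b, h⟩ := fun b h => dif_pos h
  refine ⟨fun x y => f (Δ x y), fun x y => congrArg f (hsym x y), fun c => ?_,
    FDelta_comp_of_injOn Δ ?_⟩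
  · obtain ⟨⟨b, hb⟩, hc⟩ := e.surjective c
    obtain ⟨x, -, y, -, hxy, hxyb⟩ := id hb
    exact ⟨x, y, hxy, by simp only [hxyb, hf b hb, hc]⟩
  · intro b hb b' hb' h
    rw [hf b hb, hf b' hb'] at h
    exact congrArg Subtype.val (e.injective h)

theorem psi_eq_of {β : Type*} (Δ : ℕ → ℕ → β) (hsym : ∀ x y, Δ x y = Δ y x) {m k : ℕ}
    (hm : (colorsOn Δ Set.univ).ncard = m) (hm0 : m ≠ 0) (hupper : (FDelta Δ).ncard ≤ k)
    (hlower : ∀ Δ' : ℕ → ℕ → Fin m, (∀ x y, Δ' x y = Δ' y x) →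
      (∀ c, ∃ x y, x ≠ y ∧ Δ' x y = c) → k ≤ (FDelta Δ').ncard) :
    psi m = k := by
  obtain ⟨Δ', hsym', hsurj', hF⟩ :=
    exists_fin_recoloring Δ hsym (Set.finite_of_ncard_ne_zero (hm ▸ hm0))
  subst hm
  unfold psi
  refine le_antisymm ((Nat.sInf_le ?_).trans (hF ▸ hupper)) (le_csInf ?_ ?_)
  · exact ⟨Δ', hsym', hsurj', rfl⟩
  · exact ⟨_, Δ', hsym', hsurj', rfl⟩
  · rintro _ ⟨Δ'', h₁, h₂, rfl⟩
    exact hlower Δ'' h₁ h₂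

theorem colorsOn_finite {C : Type*} (Δ : ℕ → ℕ → C) {X : Set ℕ} (hX : X.Finite) :
    (colorsOn Δ X).Finite :=
  ((hX.prod hX).image fun p => Δ p.1 p.2).subset <| by
    rintro _ ⟨x, hx, y, hy, -, rfl⟩
    exact ⟨(x, y), ⟨hx, hy⟩, rfl⟩

theorem ncard_colorsOn_sym2Mk {P : Set ℕ} (hP : P.Finite) :
    (colorsOn (fun a b => s(a, b)) P).ncard = P.ncard.choose 2 := by
  lift P to Finset ℕ using hP
  rw [Set.ncard_coe_finset, ← Sym2.card_image_offDiag, ← Set.ncard_coe_finset]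
  congr 1
  ext z
  simp only [colorsOn, Finset.coe_image, Finset.coe_offDiag, Set.mem_image, Set.mem_offDiag,
    Finset.mem_coe, Prod.exists, Function.uncurry_apply_pair, Set.mem_ofPred_eq]
  grind

section clampColoring

variable {C : Type*}

def clampColoring (c : ℕ → ℕ → C) (N : ℕ) : ℕ → ℕ → C := fun x y => c (min x N) (min y N)

theorem clampColoring_symm {c : ℕ → ℕ → C} (hc : ∀ a b, c a b = c b a) (N x y : ℕ) :
    clampColoring c N x y = clampColoring c N y x :=
  hc _ _

theorem image_min_of_infinite {X : Set ℕ} (hX : X.Infinite) (N : ℕ) :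
    (fun x => min x N) '' X = insert N (X ∩ Set.Iio N) := by
  ext a
  simp only [Set.mem_image, Set.mem_insert_iff, Set.mem_inter_iff, Set.mem_Iio]
  constructor
  · rintro ⟨x, hx, rfl⟩
    rcases lt_or_ge x N with h | h
    · exact Or.inr ⟨by rwa [min_eq_left h.le], by omega⟩
    · exact Or.inl (min_eq_right h)
  · rintro (rfl | ⟨ha, haN⟩)
    · obtain ⟨x, hx, hNx⟩ := hX.exists_gt a
      exact ⟨x, hx, min_eq_right hNx.le⟩
    · exact ⟨a, ha, min_eq_left haN.le⟩

theorem colorsOn_clampColoring_eq_insert (c : ℕ → ℕ → C) (N : ℕ) {X : Set ℕ}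
    (hX : X.Infinite) :
    colorsOn (clampColoring c N) X = insert (c N N) (colorsOn c ((fun x => min x N) '' X)) := by
  ext
  constructor
  · rintro ⟨x, hx, y, hy, hxy, rfl⟩
    by_cases h : min x N = min y N
    · left
      simp only [clampColoring]
      rw [show min x N = N by omega, show min y N = N by omega]
    · exact Or.inr ⟨_, ⟨x, hx, rfl⟩, _, ⟨y, hy, rfl⟩, h, rfl⟩
  · rintro (rfl | ⟨_, ⟨x, hx, rfl⟩, _, ⟨y, hy, rfl⟩, hxy, rfl⟩)
    · obtain ⟨x, hx, hNx⟩ := hX.exists_gt N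
      obtain ⟨y, hy, hxy⟩ := hX.exists_gt x
      refine ⟨x, hx, y, hy, hxy.ne, ?_⟩
      simp only [clampColoring, min_eq_right hNx.le, min_eq_right (hNx.trans hxy).le]
    · exact ⟨x, hx, y, hy, fun h => hxy (h ▸ rfl), rfl⟩

theorem colorsOn_clampColoring {c : ℕ → ℕ → C} (hc : ∀ a b, c a b = c b a) (N : ℕ)
    {X : Set ℕ} (hX : X.Infinite) :
    colorsOn (clampColoring c N) X =
      insert (c N N) (colorsOn c (X ∩ Set.Iio N) ∪ c N '' (X ∩ Set.Iio N)) := by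
  have hN : N ∉ X ∩ Set.Iio N := fun h => lt_irrefl N h.2
  rw [colorsOn_clampColoring_eq_insert c N hX, image_min_of_infinite hX, colorsOn_insert hc,
    Set.sdiff_singleton_eq_self hN]

theorem ncard_FDelta_le {Δ : ℕ → ℕ → C} (N : ℕ) (f : ℕ → ℕ)
    (h : ∀ X : Set ℕ, X.Infinite → (colorsOn Δ X).ncard = f (X ∩ Set.Iio N).ncard) :
    (FDelta Δ).ncard ≤ N + 1 := by
  calc (FDelta Δ).ncard ≤ (f '' Set.Iic N).ncard := by
        refine Set.ncard_le_ncard ?_ ((Set.finite_Iic N).image f)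
        rintro _ ⟨X, hX, rfl⟩
        refine ⟨_, ?_, (h X hX).symm⟩
        simpa using Set.ncard_le_ncard (Set.inter_subset_right (s := X)) (Set.finite_Iio N)
    _ ≤ (Set.Iic N).ncard := Set.ncard_image_le (Set.finite_Iic N)
    _ = N + 1 := Set.ncard_Iic_nat N

end clampColoring

theorem notMem_of_mem_colorsOn_Iio {X : Set ℕ} {N : ℕ} {z : Sym2 ℕ}
    (hz : z ∈ colorsOn (fun a b => s(a, b)) (X ∩ Set.Iio N)) : N ∉ z := by
  obtain ⟨a, ha, b, hb, -, rfl⟩ := hz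
  intro h
  rcases Sym2.mem_iff.1 h with rfl | rfl
  exacts [lt_irrefl _ (Set.mem_Iio.1 ha.2), lt_irrefl _ (Set.mem_Iio.1 hb.2)]

theorem ncard_colorsOn_clampColoring_sym2Mk (N : ℕ) {X : Set ℕ} (hX : X.Infinite) :
    (colorsOn (clampColoring (fun a b => s(a, b)) N) X).ncard =
      (X ∩ Set.Iio N).ncard.choose 2 + (X ∩ Set.Iio N).ncard + 1 := by
  set Q := X ∩ Set.Iio N
  have hQ : Q.Finite := (Set.finite_Iio N).subset Set.inter_subset_right
  have hfin := colorsOn_finite (fun a b => s(a, b)) hQ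
  rw [colorsOn_clampColoring (fun _ _ => Sym2.eq_swap) N hX,
    Set.ncard_insert_of_notMem _ (hfin.union (hQ.image _)),
    Set.ncard_union_eq _ hfin (hQ.image _), ncard_colorsOn_sym2Mk hQ,
    Set.ncard_image_of_injective _ fun a b h => Sym2.congr_right.1 h]
  · exact Set.disjoint_left.2 fun z hz ⟨a, _, ha⟩ =>
      notMem_of_mem_colorsOn_Iio hz (ha ▸ Sym2.mem_mk_left N a)
  · rintro (h | ⟨a, ha, h⟩)
    · exact notMem_of_mem_colorsOn_Iio h (Sym2.mem_mk_left N N)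
    · exact lt_irrefl _ (Set.mem_Iio.1 ((Sym2.congr_right.1 h) ▸ ha.2))

def mergeCross (N a b : ℕ) : Option (Sym2 ℕ) :=
  if (a < N ↔ b < N) then some s(a, b) else none

theorem mergeCross_symm (N a b : ℕ) : mergeCross N a b = mergeCross N b a := by
  simp only [mergeCross, iff_comm (a := a < N), Sym2.eq_swap]

theorem ncard_colorsOn_clampColoring_mergeCross (N : ℕ) {X : Set ℕ} (hX : X.Infinite) :
    (colorsOn (clampColoring (mergeCross N) N) X).ncard =
      (X ∩ Set.Iio N).ncard.choose 2 + min (X ∩ Set.Iio N).ncard 1 + 1 := by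
  set Q := X ∩ Set.Iio N
  have hQ : Q.Finite := (Set.finite_Iio N).subset Set.inter_subset_right
  have hlow : colorsOn (mergeCross N) Q = some '' colorsOn (fun a b => s(a, b)) Q := by
    rw [← colorsOn_comp]
    refine colorsOn_congr _ fun a ha b hb => ?_
    simp [mergeCross, Set.mem_Iio.1 ha.2, Set.mem_Iio.1 hb.2]
  have hcross : mergeCross N N '' Q = (fun _ => none) '' Q :=
    Set.image_congr fun a ha => by simp [mergeCross, Set.mem_Iio.1 ha.2]
  have hcross_ncard : ((fun _ => none) '' Q : Set (Option (Sym2 ℕ))).ncard = min Q.ncard 1 := by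
    rcases Q.eq_empty_or_nonempty with hQ0 | hQ0
    · simp [hQ0]
    · rw [hQ0.image_const, Set.ncard_singleton]
      have := (Set.ncard_pos hQ).2 hQ0
      omega
  have hfin := colorsOn_finite (fun a b => s(a, b)) hQ
  rw [colorsOn_clampColoring (mergeCross_symm N) N hX, hlow, hcross,
    Set.ncard_insert_of_notMem _ ((hfin.image _).union (hQ.image _)),
    Set.ncard_union_eq _ (hfin.image _) (hQ.image _), hcross_ncard,
    Set.ncard_image_of_injective _ (Option.some_injective _), ncard_colorsOn_sym2Mk hQ]
  · exact Set.disjoint_left.2 fun _ ⟨_, _, h⟩ ⟨_, _, h'⟩ =>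
      Option.some_ne_none _ (h.trans h'.symm)
  · rintro (⟨z, hz, h⟩ | ⟨_, _, h⟩)
    · simp only [mergeCross, lt_irrefl, iff_self, if_true, Option.some.injEq] at h
      exact notMem_of_mem_colorsOn_Iio hz (h ▸ Sym2.mem_mk_left N N)
    · simp [mergeCross] at h

theorem psi_choose_two_add_one {N : ℕ} (hN : 1 ≤ N) : psi ((N + 1).choose 2 + 1) = N + 1 := by
  have hsucc : (N + 1).choose 2 = N.choose 2 + N := by
    rw [Nat.choose_succ_succ' N 1, Nat.choose_one_right, add_comm]
  refine psi_eq_of (clampColoring (fun a b => s(a, b)) N)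
    (clampColoring_symm (fun _ _ => Sym2.eq_swap) N) ?_ (by omega)
    (ncard_FDelta_le N (fun k => k.choose 2 + k + 1) fun _ =>
      ncard_colorsOn_clampColoring_sym2Mk N) fun Δ hsym hsurj => ?_
  · rw [ncard_colorsOn_clampColoring_sym2Mk N Set.infinite_univ, Set.univ_inter,
      Set.ncard_Iio_nat, hsucc]
  · have hΔ := card_le_choose_ncard_FDelta_add_one Δ hsym hsurj
    rw [Nat.card_fin] at hΔ
    by_contra! hlt
    have := Nat.choose_le_choose 2 (Nat.le_of_lt_succ hlt)
    omega

theorem psi_choose_two_add_two {n : ℕ} (hn : 1 ≤ n) : psi (n.choose 2 + 2) = n + 1 := by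
  refine psi_eq_of _ (clampColoring_symm (mergeCross_symm n) n) ?_ (by omega)
    (ncard_FDelta_le n (fun k => k.choose 2 + min k 1 + 1) fun _ =>
      ncard_colorsOn_clampColoring_mergeCross n) fun Δ hsym hsurj => ?_
  · rw [ncard_colorsOn_clampColoring_mergeCross n Set.infinite_univ, Set.univ_inter,
      Set.ncard_Iio_nat, min_eq_right hn]
  · have hΔ := card_le_choose_ncard_FDelta_add_one Δ hsym hsurj
    rw [Nat.card_fin] at hΔ
    by_contra! hlt
    have := Nat.choose_le_choose 2 (Nat.le_of_lt_succ hlt)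
    omega

/-- `ψ(binom(n,2)+1) = n` and `ψ(binom(n,2)+2) = n+1` for every `n ≥ 2`. -/
theorem stmt17 (n : ℕ) (hn : 2 ≤ n) :
    psi (n.choose 2 + 1) = n ∧ psi (n.choose 2 + 2) = n + 1 := by
  obtain ⟨N, rfl⟩ : ∃ N, n = N + 1 := ⟨n - 1, by omega⟩
  exact ⟨psi_choose_two_add_one (by omega), psi_choose_two_add_two (by omega)⟩
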